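/- Let g : ℝ → ℝ² be twice continuously differentiable on a neighborhood of ξ₀ with g'(ξ₀) ≠ 0, and let η₀ ∈ ℝ satisfy 1 + η₀ κ(ξ₀) ≠ 0. Then the Frenet map P(η,ξ) = g(ξ) + η n(ξ) is a local diffeomorphism at (η₀,ξ₀): there exist open neighborhoods U of (η₀,ξ₀) and V of P(η₀,ξ₀) in ℝ² such that P restricted to U is a bijection onto V whose inverse is continuously differentiable. -/

import Mathlib

/-!
By the Frenet–Serret formula `n' = κ g'`, the Jacobian of `P` at `(η, ξ)` has columns `n(ξ)` and
`(1 + η κ(ξ)) g'(ξ)`. Since `n` is `g'/‖g'‖` rotated by a right angle, its determinant is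
`(1 + η κ(ξ)) ‖g'(ξ)‖ ≠ 0`, and `P` is `C¹` because `g` is `C²`; the inverse function theorem
concludes.
-/

open Real Set

/-- The speed `‖g'(ξ)‖` (Euclidean norm of the derivative) of a planar curve. -/
noncomputable def speed (g : ℝ → ℝ × ℝ) (ξ : ℝ) : ℝ :=
  Real.sqrt ((deriv g ξ).1 ^ 2 + (deriv g ξ).2 ^ 2)

/-- The unit tangent vector `τ(ξ) = g'(ξ)/‖g'(ξ)‖`. -/
noncomputable def unitTangent (g : ℝ → ℝ × ℝ) (ξ : ℝ) : ℝ × ℝ :=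
  ((deriv g ξ).1 / speed g ξ, (deriv g ξ).2 / speed g ξ)

/-- The unit normal vector `n(ξ) = (τ₂(ξ), -τ₁(ξ))`. -/
noncomputable def unitNormal (g : ℝ → ℝ × ℝ) (ξ : ℝ) : ℝ × ℝ :=
  ((unitTangent g ξ).2, -(unitTangent g ξ).1)

/-- The signed curvature `κ(ξ) = (g₁'(ξ)g₂''(ξ) - g₂'(ξ)g₁''(ξ))/‖g'(ξ)‖³`. -/
noncomputable def signedCurvature (g : ℝ → ℝ × ℝ) (ξ : ℝ) : ℝ :=
  ((deriv g ξ).1 * (deriv (deriv g) ξ).2 - (deriv g ξ).2 * (deriv (deriv g) ξ).1) /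
    speed g ξ ^ 3


/-- The Frenet (tubular) map `P(η,ξ) = g(ξ) + η n(ξ)`, with argument `p = (η, ξ)`. -/
noncomputable def frenetMap (g : ℝ → ℝ × ℝ) (p : ℝ × ℝ) : ℝ × ℝ :=
  g p.2 + p.1 • unitNormal g p.2

section Prod

variable {𝕜 E F : Type*} [NontriviallyNormedField 𝕜] [NormedAddCommGroup E] [NormedSpace 𝕜 E]
  [NormedAddCommGroup F] [NormedSpace 𝕜 F] {f : 𝕜 → E × F} {f' : E × F} {x : 𝕜}

theorem HasDerivAt.fst (h : HasDerivAt f f' x) : HasDerivAt (fun y => (f y).1) f'.1 x := by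
  simpa using h.hasFDerivAt.fst.hasDerivAt

theorem HasDerivAt.snd (h : HasDerivAt f f' x) : HasDerivAt (fun y => (f y).2) f'.2 x := by
  simpa using h.hasFDerivAt.snd.hasDerivAt

end Prod

section Tube

variable {𝕜 E : Type*} [NontriviallyNormedField 𝕜] [NormedAddCommGroup E] [NormedSpace 𝕜 E]

theorem HasDerivAt.hasFDerivAt_comp_snd_add_fst_smul {g N : 𝕜 → E} {g' N' : E} {η ξ : 𝕜}
    (hg : HasDerivAt g g' ξ) (hN : HasDerivAt N N' ξ) :
    HasFDerivAt (fun p : 𝕜 × 𝕜 => g p.2 + p.1 • N p.2)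
      ((ContinuousLinearMap.fst 𝕜 𝕜 𝕜).smulRight (N ξ) +
        (ContinuousLinearMap.snd 𝕜 𝕜 𝕜).smulRight (g' + η • N')) (η, ξ) := by
  have hg₂ := hg.hasFDerivAt.comp (η, ξ) (hasFDerivAt_snd (𝕜 := 𝕜) (E := 𝕜) (F := 𝕜))
  have hN₂ := hN.hasFDerivAt.comp (η, ξ) (hasFDerivAt_snd (𝕜 := 𝕜) (E := 𝕜) (F := 𝕜))
  refine (hg₂.add (hasFDerivAt_fst.smul hN₂)).congr_fderiv ?_
  ext <;> simp

theorem isInvertible_fst_smulRight_add_snd_smulRight [CompleteSpace 𝕜] {u w : 𝕜 × 𝕜}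
    (h : u.1 * w.2 - u.2 * w.1 ≠ 0) :
    ((ContinuousLinearMap.fst 𝕜 𝕜 𝕜).smulRight u +
      (ContinuousLinearMap.snd 𝕜 𝕜 𝕜).smulRight w).IsInvertible := by
  set L := (ContinuousLinearMap.fst 𝕜 𝕜 𝕜).smulRight u +
      (ContinuousLinearMap.snd 𝕜 𝕜 𝕜).smulRight w
  have hinj : Function.Injective L := by
    rw [injective_iff_map_eq_zero]
    intro x hx
    simp only [add_apply, ContinuousLinearMap.smulRight_apply, ContinuousLinearMap.coe_fst',
      ContinuousLinearMap.coe_snd', Prod.ext_iff, Prod.fst_add, Prod.snd_add, Prod.smul_fst,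
      Prod.smul_snd, smul_eq_mul, Prod.fst_zero, Prod.snd_zero, L] at hx
    obtain ⟨h₁, h₂⟩ := hx
    refine Prod.ext ((mul_eq_zero.mp ?_).resolve_right h) ((mul_eq_zero.mp ?_).resolve_right h)
    · linear_combination w.2 * h₁ - w.1 * h₂
    · linear_combination u.1 * h₂ - u.2 * h₁
  exact ⟨(LinearEquiv.ofInjectiveEndo L.toLinearMap hinj).toContinuousLinearEquiv, rfl⟩

end Tube

theorem ContDiffAt.exists_bijOn_contDiffOn_inverse {𝕜 E F : Type*} [RCLike 𝕜]
    [NormedAddCommGroup E] [NormedSpace 𝕜 E] [CompleteSpace E]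
    [NormedAddCommGroup F] [NormedSpace 𝕜 F] {f : E → F} {f' : E →L[𝕜] F} {a : E} {n : ℕ}
    (hf : ContDiffAt 𝕜 n f a) (hf' : HasFDerivAt f f' a) (hinv : f'.IsInvertible)
    (hn : n ≠ 0) :
    ∃ (U : Set E) (V : Set F), IsOpen U ∧ IsOpen V ∧ a ∈ U ∧ f a ∈ V ∧ BijOn f U V ∧
      ∃ Q : F → E, ContDiffOn 𝕜 n Q V ∧ (∀ p ∈ U, Q (f p) = p) ∧ (∀ q ∈ V, f (Q q) = q) := by
  obtain ⟨e, rfl⟩ := hinv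
  have hn' : (n : WithTop ℕ∞) ≠ 0 := by exact_mod_cast hn
  set Φ := hf.toOpenPartialHomeomorph f hf' hn'
  obtain ⟨t, ht, hQ⟩ := (hf.to_localInverse hf' hn').contDiffOn le_rfl (by simp)
  obtain ⟨t', ht't, ht'_open, hat'⟩ := mem_nhds_iff.mp ht
  -- shrink `Φ` so that its target lies in the open set `t'` where the inverse is `C^n`
  set Ψ := (Φ.symm.restrOpen t' ht'_open).symm
  refine ⟨Ψ.source, Ψ.target, Ψ.open_source, Ψ.open_target, ?_, ?_, Ψ.bijOn, Ψ.symm,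
    hQ.mono (inter_subset_right.trans ht't), fun p hp => Ψ.left_inv hp, fun q hq => Ψ.right_inv hq⟩
  · exact ⟨hf.mem_toOpenPartialHomeomorph_source hf' hn', hat'⟩
  · exact ⟨hf.image_mem_toOpenPartialHomeomorph_target hf' hn', hat'⟩

section PlaneCurve

variable {g : ℝ → ℝ × ℝ} {ξ : ℝ}

theorem sq_speed : speed g ξ ^ 2 = (deriv g ξ).1 ^ 2 + (deriv g ξ).2 ^ 2 :=
  Real.sq_sqrt (by positivity)

theorem speed_pos (h : deriv g ξ ≠ 0) : 0 < speed g ξ := by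
  refine Real.sqrt_pos.mpr (lt_of_le_of_ne (by positivity) fun h0 => h ?_)
  have h1 : (deriv g ξ).1 = 0 := by nlinarith [sq_nonneg (deriv g ξ).1, sq_nonneg (deriv g ξ).2]
  have h2 : (deriv g ξ).2 = 0 := by nlinarith [sq_nonneg (deriv g ξ).1, sq_nonneg (deriv g ξ).2]
  exact Prod.ext h1 h2

theorem sq_add_sq_deriv_ne_zero (h : deriv g ξ ≠ 0) :
    (deriv g ξ).1 ^ 2 + (deriv g ξ).2 ^ 2 ≠ 0 := by
  rw [← sq_speed]; exact (pow_pos (speed_pos h) 2).ne'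

theorem unitNormal_fst_mul_sub :
    (unitNormal g ξ).1 * (deriv g ξ).2 - (unitNormal g ξ).2 * (deriv g ξ).1 = speed g ξ := by
  calc (unitNormal g ξ).1 * (deriv g ξ).2 - (unitNormal g ξ).2 * (deriv g ξ).1
      = ((deriv g ξ).1 ^ 2 + (deriv g ξ).2 ^ 2) / speed g ξ := by
        simp only [unitNormal, unitTangent]; ring
    _ = speed g ξ := by rw [← sq_speed, sq, mul_self_div_self]

theorem hasDerivAt_speed {g'' : ℝ × ℝ} (hd : HasDerivAt (deriv g) g'' ξ) (h : deriv g ξ ≠ 0) :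
    HasDerivAt (speed g) (((deriv g ξ).1 * g''.1 + (deriv g ξ).2 * g''.2) / speed g ξ) ξ := by
  refine ((Real.hasDerivAt_sqrt (sq_add_sq_deriv_ne_zero h)).comp ξ
    ((hd.fst.pow 2).add (hd.snd.pow 2))).congr_deriv ?_
  simp only [speed]
  push_cast
  ring

theorem hasDerivAt_unitNormal (hd : DifferentiableAt ℝ (deriv g) ξ) (h : deriv g ξ ≠ 0) :
    HasDerivAt (unitNormal g) (signedCurvature g ξ • deriv g ξ) ξ := by
  have hdd := hd.hasDerivAt
  have hv := (speed_pos h).ne'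
  have hs := hasDerivAt_speed hdd h
  refine ((hdd.snd.div hs hv).prodMk (hdd.fst.div hs hv).neg).congr_deriv ?_
  have hsq := sq_speed (g := g) (ξ := ξ)
  simp only [signedCurvature, Prod.smul_fst, Prod.smul_snd, smul_eq_mul, Prod.ext_iff]
  constructor <;> field_simp <;> rw [hsq] <;> ring

theorem contDiffAt_unitNormal {n : WithTop ℕ∞} (hd : ContDiffAt ℝ n (deriv g) ξ)
    (h : deriv g ξ ≠ 0) : ContDiffAt ℝ n (unitNormal g) ξ := by
  have hd₁ : ContDiffAt ℝ n (fun x => (deriv g x).1) ξ := contDiffAt_fst.comp ξ hd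
  have hd₂ : ContDiffAt ℝ n (fun x => (deriv g x).2) ξ := contDiffAt_snd.comp ξ hd
  have hs : ContDiffAt ℝ n (speed g) ξ :=
    (Real.contDiffAt_sqrt (sq_add_sq_deriv_ne_zero h)).comp ξ ((hd₁.pow 2).add (hd₂.pow 2))
  exact (hd₂.div hs (speed_pos h).ne').prodMk (hd₁.div hs (speed_pos h).ne').neg

theorem contDiffAt_frenetMap {n : WithTop ℕ∞} (hg : ContDiffAt ℝ (n + 1) g ξ)
    (h : deriv g ξ ≠ 0) (η : ℝ) : ContDiffAt ℝ n (frenetMap g) (η, ξ) :=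
  ((hg.of_le le_self_add).comp _ contDiffAt_snd).add
    (contDiffAt_fst.smul
      ((contDiffAt_unitNormal (hg.derivWithin le_rfl) h).comp (η, ξ) contDiffAt_snd))

theorem hasFDerivAt_frenetMap (hd : DifferentiableAt ℝ (deriv g) ξ) (h : deriv g ξ ≠ 0)
    (η : ℝ) :
    HasFDerivAt (frenetMap g) ((ContinuousLinearMap.fst ℝ ℝ ℝ).smulRight (unitNormal g ξ) +
      (ContinuousLinearMap.snd ℝ ℝ ℝ).smulRight ((1 + η * signedCurvature g ξ) • deriv g ξ))
      (η, ξ) := by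
  refine ((differentiableAt_of_deriv_ne_zero h).hasDerivAt.hasFDerivAt_comp_snd_add_fst_smul
    (hasDerivAt_unitNormal hd h) (η := η)).congr_fderiv ?_
  rw [add_smul, one_smul, smul_smul]

theorem isInvertible_fderiv_frenetMap (h : deriv g ξ ≠ 0) {η : ℝ}
    (hκ : 1 + η * signedCurvature g ξ ≠ 0) :
    ((ContinuousLinearMap.fst ℝ ℝ ℝ).smulRight (unitNormal g ξ) +
      (ContinuousLinearMap.snd ℝ ℝ ℝ).smulRight ((1 + η * signedCurvature g ξ) • deriv g ξ)
      ).IsInvertible := by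
  refine isInvertible_fst_smulRight_add_snd_smulRight ?_
  calc _ = (1 + η * signedCurvature g ξ) *
        ((unitNormal g ξ).1 * (deriv g ξ).2 - (unitNormal g ξ).2 * (deriv g ξ).1) := by
        simp only [Prod.smul_fst, Prod.smul_snd, smul_eq_mul]; ring
    _ ≠ 0 := by rw [unitNormal_fst_mul_sub]; exact mul_ne_zero hκ (speed_pos h).ne'

end PlaneCurve

/-- If `g` is C² on an open neighborhood of `ξ₀` with `g'(ξ₀) ≠ 0` and `1 + η₀κ(ξ₀) ≠ 0`,
then the Frenet map `P(η,ξ) = g(ξ) + η n(ξ)` is a local diffeomorphism at `(η₀, ξ₀)`: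
there are open neighborhoods `U` of `(η₀,ξ₀)` and `V` of `P(η₀,ξ₀)` such that `P`
restricted to `U` is a bijection onto `V` with a continuously differentiable inverse. -/
theorem frenetMap_local_diffeo (g : ℝ → ℝ × ℝ) (ξ₀ η₀ : ℝ)
    (W : Set ℝ) (hWopen : IsOpen W) (hξ₀W : ξ₀ ∈ W)
    (hg : ContDiffOn ℝ 2 g W) (hg' : deriv g ξ₀ ≠ 0)
    (hκ : 1 + η₀ * signedCurvature g ξ₀ ≠ 0) :
    ∃ U V : Set (ℝ × ℝ), IsOpen U ∧ IsOpen V ∧ (η₀, ξ₀) ∈ U ∧ frenetMap g (η₀, ξ₀) ∈ V ∧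
      Set.BijOn (frenetMap g) U V ∧
      ∃ Q : ℝ × ℝ → ℝ × ℝ, ContDiffOn ℝ 1 Q V ∧
        (∀ p ∈ U, Q (frenetMap g p) = p) ∧ (∀ q ∈ V, frenetMap g (Q q) = q) := by
  have hg₀ : ContDiffAt ℝ 2 g ξ₀ := hg.contDiffAt (hWopen.mem_nhds hξ₀W)
  have hd₀ : DifferentiableAt ℝ (deriv g) ξ₀ :=
    (hg₀.derivWithin le_rfl).differentiableAt one_ne_zero
  exact ContDiffAt.exists_bijOn_contDiffOn_inverse (contDiffAt_frenetMap (n := 1) hg₀ hg' η₀)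
    (hasFDerivAt_frenetMap hd₀ hg' η₀) (isInvertible_fderiv_frenetMap hg' hκ) one_ne_zero
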